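/- Let J : M → ℝ be continuous with min J = m > 0 and α-Hölder with constant C, on a compact metric space M. Let f be β-Lipschitz, β > 1, and let x_i satisfy ρ(x_i, f^i x) ≤ γεβ^i for 0 ≤ i ≤ k−1. Then |(1/k) ln ∏_{i=0}^{k−1} J(x_i) − (1/k) ∑_{i=0}^{k−1} ln J(f^i x)| ≤ C(εγ)^α β^{kα}/(k·m·(β^α − 1)). -/

import Mathlib

/-!
Since `J ≥ m > 0`, the logarithm is `1/m`-Lipschitz on the range of `J`, so the `i`-th term of the
difference is at most `C (γεβ^i)^α / m = C (εγ)^α (β^α)^i / m` by the Hölder bound. Summing the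
geometric series with ratio `β^α > 1` gives `∑_{i<k} (β^α)^i ≤ β^{kα} / (β^α - 1)`.
-/

open Finset

lemma Real.abs_log_sub_log_le_abs_sub_div {m a b : ℝ} (hm : 0 < m) (ha : m ≤ a) (hb : m ≤ b) :
    |log a - log b| ≤ |a - b| / m := by
  wlog hba : b ≤ a generalizing a b
  · rw [abs_sub_comm, abs_sub_comm a b]
    exact this hb ha (le_of_not_ge hba)
  have hb0 : 0 < b := hm.trans_le hb
  have ha0 : 0 < a := hm.trans_le ha
  rw [abs_of_nonneg (sub_nonneg.2 (log_le_log hb0 hba)), abs_of_nonneg (sub_nonneg.2 hba),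
    ← log_div ha0.ne' hb0.ne']
  calc log (a / b) ≤ a / b - 1 := log_le_sub_one_of_pos (by positivity)
    _ = (a - b) / b := by field_simp
    _ ≤ (a - b) / m := by gcongr

lemma abs_log_sub_log_le_of_holder {X : Type*} [PseudoMetricSpace X] {J : X → ℝ} {m C α δ : ℝ}
    (hm : 0 < m) (hJm : ∀ y, m ≤ J y) (hC : 0 ≤ C) (hα : 0 ≤ α)
    (hHolder : ∀ y z : X, |J y - J z| ≤ C * dist y z ^ α) {y z : X} (hyz : dist y z ≤ δ) :
    |Real.log (J y) - Real.log (J z)| ≤ C * δ ^ α / m :=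
  calc |Real.log (J y) - Real.log (J z)| ≤ |J y - J z| / m :=
        Real.abs_log_sub_log_le_abs_sub_div hm (hJm y) (hJm z)
    _ ≤ C * δ ^ α / m := by
        gcongr
        exact (hHolder y z).trans (by gcongr)

lemma sum_fin_pow_le_pow_div_sub_one {r : ℝ} (hr : 1 < r) (k : ℕ) :
    ∑ i : Fin k, r ^ (i : ℕ) ≤ r ^ k / (r - 1) := by
  rw [Fin.sum_univ_eq_sum_range (r ^ ·), geom_sum_eq hr.ne']
  gcongr; linarith

lemma abs_sum_sub_sum_le_of_abs_sub_le_geom {k : ℕ} {a b : Fin k → ℝ} {c r : ℝ} (hc : 0 ≤ c)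
    (hr : 1 < r) (hab : ∀ i, |a i - b i| ≤ c * r ^ (i : ℕ)) :
    |∑ i, a i - ∑ i, b i| ≤ c * r ^ k / (r - 1) :=
  calc |∑ i, a i - ∑ i, b i| ≤ ∑ i, |a i - b i| := by
        rw [← sum_sub_distrib]; exact abs_sum_le_sum_abs _ _
    _ ≤ ∑ i : Fin k, c * r ^ (i : ℕ) := sum_le_sum fun i _ ↦ hab i
    _ ≤ c * (r ^ k / (r - 1)) := by
        rw [← mul_sum]; exact mul_le_mul_of_nonneg_left (sum_fin_pow_le_pow_div_sub_one hr k) hc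
    _ = c * r ^ k / (r - 1) := by ring

lemma Real.mul_mul_pow_rpow {a b β α : ℝ} (ha : 0 ≤ a) (hb : 0 ≤ b) (hβ : 0 ≤ β) (i : ℕ) :
    (a * b * β ^ i) ^ α = (b * a) ^ α * (β ^ α) ^ i := by
  rw [mul_rpow (by positivity) (by positivity), mul_comm a b, ← rpow_natCast, ← rpow_natCast,
    ← rpow_mul hβ, ← rpow_mul hβ, mul_comm α]

theorem stmt_3_general {M : Type*} [MetricSpace M]
    (J : M → ℝ) (m : ℝ) (hm : 0 < m) (hJm : ∀ y, m ≤ J y)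
    (C α : ℝ) (hC : 0 < C) (hα : 0 < α)
    (hHolder : ∀ y z : M, |J y - J z| ≤ C * dist y z ^ α)
    (f : M → M) (β : ℝ) (hβ : 1 < β)
    (x : M) (k : ℕ) (xi : Fin k → M) (γ ε : ℝ) (hγ : 0 < γ) (hε : 0 < ε)
    (hxi : ∀ i : Fin k, dist (xi i) (f^[(i : ℕ)] x) ≤ γ * ε * β ^ (i : ℕ)) :
    |(1 / (k : ℝ)) * Real.log (∏ i : Fin k, J (xi i)) -
        (1 / (k : ℝ)) * ∑ i : Fin k, Real.log (J (f^[(i : ℕ)] x))| ≤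
      C * (ε * γ) ^ α * β ^ ((k : ℝ) * α) / ((k : ℝ) * m * (β ^ α - 1)) := by
  have hβ0 : 0 ≤ β := by linarith
  have hlog : Real.log (∏ i, J (xi i)) = ∑ i, Real.log (J (xi i)) :=
    Real.log_prod fun i _ ↦ (hm.trans_le (hJm _)).ne'
  have hterm : ∀ i : Fin k, |Real.log (J (xi i)) - Real.log (J (f^[(i : ℕ)] x))| ≤
      C * (ε * γ) ^ α / m * (β ^ α) ^ (i : ℕ) := fun i ↦ by
    have := abs_log_sub_log_le_of_holder hm hJm hC.le hα.le hHolder (hxi i)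
    rwa [Real.mul_mul_pow_rpow hγ.le hε.le hβ0, ← mul_assoc, mul_div_right_comm] at this
  have hsum := abs_sum_sub_sum_le_of_abs_sub_le_geom (by positivity)
    (Real.one_lt_rpow hβ hα) hterm
  rw [← Real.rpow_natCast, ← Real.rpow_mul hβ0, mul_comm α] at hsum
  rw [← mul_sub, abs_mul, abs_of_nonneg (by positivity), hlog]
  calc _ ≤ 1 / (k : ℝ) * (C * (ε * γ) ^ α / m * β ^ ((k : ℝ) * α) / (β ^ α - 1)) := by gcongr
    _ = _ := by simp only [div_eq_mul_inv, mul_inv]; ring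

theorem stmt_3 {M : Type*} [MetricSpace M] [CompactSpace M]
    (J : M → ℝ) (hJc : Continuous J) (m : ℝ) (hm : 0 < m) (hJm : ∀ y, m ≤ J y)
    (hmin : ∃ y₀, J y₀ = m)
    (C α : ℝ) (hC : 0 < C) (hα : 0 < α)
    (hHolder : ∀ y z : M, |J y - J z| ≤ C * dist y z ^ α)
    (f : M → M) (β : ℝ) (hβ : 1 < β)
    (hf : ∀ y z : M, dist (f y) (f z) ≤ β * dist y z)
    (x : M) (k : ℕ) (hk : 0 < k) (xi : Fin k → M) (γ ε : ℝ) (hγ : 0 < γ) (hε : 0 < ε)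
    (hxi : ∀ i : Fin k, dist (xi i) (f^[(i : ℕ)] x) ≤ γ * ε * β ^ (i : ℕ)) :
    |(1 / (k : ℝ)) * Real.log (∏ i : Fin k, J (xi i)) -
        (1 / (k : ℝ)) * ∑ i : Fin k, Real.log (J (f^[(i : ℕ)] x))| ≤
      C * (ε * γ) ^ α * β ^ ((k : ℝ) * α) / ((k : ℝ) * m * (β ^ α - 1)) :=
  stmt_3_general J m hm hJm C α hC hα hHolder f β hβ x k xi γ ε hγ hε hxi
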